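/- arXiv:2406.09903 — 3 statements merged into one kernel-verified Lean document; each statement's English description precedes it below -/
import Mathlib

section
/- Let x ∈ ℂⁿ with ‖x‖ = 1 and let z₁, z₂ ∈ ℂⁿ satisfy max(‖z₁ − x‖, ‖z₂ − x‖) ≤ γ ≤ 1/4. Define αᵢ = (x* zᵢ)/|x* zᵢ| for i = 1,2 (well-defined since |x* zᵢ| ≥ 1/2). Then |α₁ − α₂| ≤ 4‖z₁ − z₂‖. -/
/-!
With `a = x* z₁` and `b = x* z₂`, Cauchy–Schwarz against the unit vector `x` gives
`|a - b| ≤ ‖z₁ - z₂‖` and `|a - 1| ≤ ‖z₁ - x‖ ≤ 1/4`, so `|a| ≥ 3/4`. Normalization is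
Lipschitz away from the origin: `|a/|a| - b/|b|| ≤ 2|a - b|/|a|`, which is at most `4‖z₁ - z₂‖`.
-/

theorem norm_inv_norm_smul_sub_inv_norm_smul_le {E : Type*} [NormedAddCommGroup E]
    [NormedSpace ℝ E] {a : E} (ha : a ≠ 0) (b : E) :
    ‖‖a‖⁻¹ • a - ‖b‖⁻¹ • b‖ ≤ 2 * ‖a - b‖ / ‖a‖ := by
  have hrescale : ‖‖a‖⁻¹ • b - ‖b‖⁻¹ • b‖ ≤ ‖a - b‖ / ‖a‖ := by
    rcases eq_or_ne b 0 with rfl | hb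
    · simp only [smul_zero, sub_zero, norm_zero]
      positivity
    rw [← sub_smul, norm_smul, Real.norm_eq_abs, inv_sub_inv (norm_ne_zero_iff.2 ha)
      (norm_ne_zero_iff.2 hb), abs_div, abs_of_pos (by positivity : 0 < ‖a‖ * ‖b‖),
      div_mul_eq_mul_div, mul_div_mul_right _ _ (norm_ne_zero_iff.2 hb)]
    gcongr
    rw [norm_sub_rev]
    exact abs_norm_sub_norm_le b a
  calc ‖‖a‖⁻¹ • a - ‖b‖⁻¹ • b‖
      ≤ ‖‖a‖⁻¹ • a - ‖a‖⁻¹ • b‖ + ‖‖a‖⁻¹ • b - ‖b‖⁻¹ • b‖ :=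
        norm_sub_le_norm_sub_add_norm_sub _ _ _
    _ ≤ ‖a - b‖ / ‖a‖ + ‖a - b‖ / ‖a‖ := by
      gcongr
      rw [← smul_sub, norm_smul, norm_inv, norm_norm, inv_mul_eq_div]
    _ = 2 * ‖a - b‖ / ‖a‖ := by ring

theorem norm_inner_sub_inner_le_of_norm_eq_one {𝕜 E : Type*} [RCLike 𝕜]
    [SeminormedAddCommGroup E] [InnerProductSpace 𝕜 E] {x : E} (hx : ‖x‖ = 1) (y z : E) :
    ‖inner 𝕜 x y - inner 𝕜 x z‖ ≤ ‖y - z‖ := by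
  simpa only [← inner_sub_right, hx, one_mul] using norm_inner_le_norm (𝕜 := 𝕜) x (y - z)

theorem stmt2_general {n : ℕ} (x z₁ z₂ : EuclideanSpace ℂ (Fin n)) (γ : ℝ)
    (hx : ‖x‖ = 1) (h1 : ‖z₁ - x‖ ≤ γ) (hγ : γ ≤ 1 / 4) :
    ‖(inner ℂ x z₁ : ℂ) / ((‖(inner ℂ x z₁ : ℂ)‖ : ℝ) : ℂ) -
        (inner ℂ x z₂ : ℂ) / ((‖(inner ℂ x z₂ : ℂ)‖ : ℝ) : ℂ)‖ ≤ 4 * ‖z₁ - z₂‖ := by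
  set a := inner ℂ x z₁
  set b := inner ℂ x z₂
  have ha : 1 / 2 ≤ ‖a‖ := by
    have hclose := norm_inner_sub_inner_le_of_norm_eq_one (𝕜 := ℂ) hx z₁ x
    rw [inner_self_eq_one_of_norm_eq_one hx] at hclose
    linarith [norm_sub_norm_le (1 : ℂ) a, norm_sub_rev a 1, norm_one (α := ℂ)]
  have hab : ‖a - b‖ ≤ ‖z₁ - z₂‖ := norm_inner_sub_inner_le_of_norm_eq_one hx z₁ z₂
  simp only [div_eq_inv_mul, ← Complex.ofReal_inv, ← Complex.real_smul]
  calc ‖‖a‖⁻¹ • a - ‖b‖⁻¹ • b‖ ≤ 2 * ‖a - b‖ / ‖a‖ :=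
        norm_inv_norm_smul_sub_inv_norm_smul_le (norm_pos_iff.1 (by linarith)) b
    _ ≤ 4 * ‖z₁ - z₂‖ := by
      rw [div_le_iff₀ (by linarith)]
      nlinarith [norm_nonneg (a - b)]

/-- For a unit vector `x` and `z₁, z₂` within distance `γ ≤ 1/4` of `x`, the aligning
phases `αᵢ = (x* zᵢ)/|x* zᵢ|` satisfy `|α₁ - α₂| ≤ 4‖z₁ - z₂‖`. -/
theorem stmt2 {n : ℕ} (x z₁ z₂ : EuclideanSpace ℂ (Fin n)) (γ : ℝ)
    (hx : ‖x‖ = 1) (h1 : ‖z₁ - x‖ ≤ γ) (h2 : ‖z₂ - x‖ ≤ γ) (hγ : γ ≤ 1 / 4) :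
    ‖(inner ℂ x z₁ : ℂ) / ((‖(inner ℂ x z₁ : ℂ)‖ : ℝ) : ℂ) -
        (inner ℂ x z₂ : ℂ) / ((‖(inner ℂ x z₂ : ℂ)‖ : ℝ) : ℂ)‖ ≤ 4 * ‖z₁ - z₂‖ :=
  stmt2_general x z₁ z₂ γ hx h1 hγ
end

section
/- Let x ∈ ℂⁿ with ‖x‖ = 1 and let z₁, z₂ ∈ ℂⁿ satisfy max(‖z₁ − x‖, ‖z₂ − x‖) ≤ γ ≤ 1/4. Let αᵢ = argmin over unimodular α of ‖zᵢ − α x‖, i.e., αᵢ = (x* zᵢ)/|x* zᵢ|. Then ‖conj(α₁) z₁ − conj(α₂) z₂‖ ≤ 6‖z₁ − z₂‖. -/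
/-!
The phases `αᵢ` are the normalizations of `βᵢ = x* zᵢ`, which lie within `γ ≤ 1/4` of `1`,
hence have modulus at least `3/4`. Normalization is `8/3`-Lipschitz away from the ball of
radius `3/4`, so `|α₁ - α₂| ≤ (8/3) |β₁ - β₂| ≤ (8/3) ‖z₁ - z₂‖`, and splitting
`ᾱ₁ z₁ - ᾱ₂ z₂ = ᾱ₁ (z₁ - z₂) + (ᾱ₁ - ᾱ₂) z₂` with `‖z₂‖ ≤ 5/4` gives the constant
`1 + (8/3)(5/4) < 6`.
-/

namespace NormedSpace

variable {V : Type*} [NormedAddCommGroup V] [NormedSpace ℝ V]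

theorem norm_normalize_le (y : V) : ‖normalize y‖ ≤ 1 := by
  by_cases hy : y = 0
  · simp [hy]
  · exact (norm_normalize hy).le

theorem norm_normalize_sub_normalize_le {x : V} (hx : x ≠ 0) (y : V) :
    ‖normalize x - normalize y‖ ≤ 2 * ‖x - y‖ / ‖x‖ := by
  have hx' : ‖x‖ ≠ 0 := norm_ne_zero_iff.mpr hx
  have hsplit : normalize x - normalize y
      = ‖x‖⁻¹ • (x - y) + ‖x‖⁻¹ • ((‖y‖ - ‖x‖) • normalize y) := by
    conv_rhs => rw [← smul_add, sub_smul, norm_smul_normalize]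
    rw [sub_add_sub_cancel, smul_sub, smul_smul, inv_mul_cancel₀ hx', one_smul]
    rfl
  have hnorm : ‖(‖y‖ - ‖x‖) • normalize y‖ ≤ ‖x - y‖ :=
    calc ‖(‖y‖ - ‖x‖) • normalize y‖ ≤ |‖y‖ - ‖x‖| * 1 := by
          rw [norm_smul, Real.norm_eq_abs]
          gcongr
          exact norm_normalize_le y
      _ ≤ ‖x - y‖ := by rw [mul_one, abs_sub_comm]; exact abs_norm_sub_norm_le x y
  calc ‖normalize x - normalize y‖
      ≤ ‖x‖⁻¹ * ‖x - y‖ + ‖x‖⁻¹ * ‖(‖y‖ - ‖x‖) • normalize y‖ := by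
        rw [hsplit]
        refine (norm_add_le _ _).trans_eq ?_
        simp only [norm_smul, norm_inv, norm_norm]
    _ ≤ ‖x‖⁻¹ * ‖x - y‖ + ‖x‖⁻¹ * ‖x - y‖ := by gcongr
    _ = 2 * ‖x - y‖ / ‖x‖ := by ring

end NormedSpace

theorem Complex.div_norm_eq_normalize (z : ℂ) : z / (‖z‖ : ℂ) = NormedSpace.normalize z := by
  rw [NormedSpace.normalize, Complex.real_smul, div_eq_inv_mul, Complex.ofReal_inv]

theorem norm_smul_sub_smul_le {𝕜 E : Type*} [NormedField 𝕜] [SeminormedAddCommGroup E]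
    [NormedSpace 𝕜 E] (a b : 𝕜) (u v : E) :
    ‖a • u - b • v‖ ≤ ‖a‖ * ‖u - v‖ + ‖a - b‖ * ‖v‖ := by
  have : a • u - b • v = a • (u - v) + (a - b) • v := by
    rw [smul_sub, sub_smul]; abel
  rw [this, ← norm_smul, ← norm_smul]
  exact norm_add_le _ _

section UnitVector

variable {𝕜 E : Type*} [RCLike 𝕜] [NormedAddCommGroup E] [InnerProductSpace 𝕜 E]
  {x : E} (hx : ‖x‖ = 1)
include hx

theorem norm_inner_sub_inner_le_of_norm_eq_one_s3 (z₁ z₂ : E) :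
    ‖inner 𝕜 x z₁ - inner 𝕜 x z₂‖ ≤ ‖z₁ - z₂‖ := by
  simpa [← inner_sub_right, hx] using norm_inner_le_norm (𝕜 := 𝕜) x (z₁ - z₂)

theorem one_sub_norm_sub_le_norm_inner_of_norm_eq_one (z : E) :
    1 - ‖z - x‖ ≤ ‖inner 𝕜 x z‖ := by
  have hxx : inner 𝕜 x x = 1 := by simp [inner_self_eq_norm_sq_to_K, hx]
  have h := norm_inner_sub_inner_le_of_norm_eq_one_s3 (𝕜 := 𝕜) hx x z
  rw [hxx, norm_sub_rev x] at h
  have h' := norm_sub_norm_le (1 : 𝕜) (1 - inner 𝕜 x z)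
  rw [norm_one, sub_sub_cancel] at h'
  linarith

end UnitVector

/-- For a unit vector `x` and `z₁, z₂` within distance `γ ≤ 1/4` of `x`, with aligning
phases `αᵢ = (x* zᵢ)/|x* zᵢ|`, one has `‖conj(α₁) z₁ - conj(α₂) z₂‖ ≤ 6‖z₁ - z₂‖`. -/
theorem stmt3 {n : ℕ} (x z₁ z₂ : EuclideanSpace ℂ (Fin n)) (γ : ℝ)
    (hx : ‖x‖ = 1) (h1 : ‖z₁ - x‖ ≤ γ) (h2 : ‖z₂ - x‖ ≤ γ) (hγ : γ ≤ 1 / 4)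
    (α₁ α₂ : ℂ)
    (hα₁ : α₁ = (inner ℂ x z₁ : ℂ) / (‖(inner ℂ x z₁ : ℂ)‖ : ℂ))
    (hα₂ : α₂ = (inner ℂ x z₂ : ℂ) / (‖(inner ℂ x z₂ : ℂ)‖ : ℂ)) :
    ‖(starRingEnd ℂ) α₁ • z₁ - (starRingEnd ℂ) α₂ • z₂‖ ≤ 6 * ‖z₁ - z₂‖ := by
  rw [Complex.div_norm_eq_normalize] at hα₁ hα₂
  have hβ₁ : (3 / 4 : ℝ) ≤ ‖inner ℂ x z₁‖ := by
    linarith [one_sub_norm_sub_le_norm_inner_of_norm_eq_one (𝕜 := ℂ) hx z₁]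
  have hα₁_norm : ‖α₁‖ = 1 := by
    rw [hα₁, NormedSpace.norm_normalize_eq_one_iff, ← norm_pos_iff]
    linarith
  have hα_sub : ‖α₁ - α₂‖ ≤ 8 / 3 * ‖z₁ - z₂‖ := by
    calc ‖α₁ - α₂‖ ≤ 2 * ‖inner ℂ x z₁ - inner ℂ x z₂‖ / ‖inner ℂ x z₁‖ := by
          rw [hα₁, hα₂]
          exact NormedSpace.norm_normalize_sub_normalize_le (norm_pos_iff.mp (by linarith)) _
      _ ≤ 2 * ‖z₁ - z₂‖ / (3 / 4) := by
          gcongr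
          exact norm_inner_sub_inner_le_of_norm_eq_one_s3 hx z₁ z₂
      _ = 8 / 3 * ‖z₁ - z₂‖ := by ring
  have hz₂ : ‖z₂‖ ≤ 5 / 4 := by linarith [norm_le_norm_add_norm_sub' z₂ x]
  calc ‖(starRingEnd ℂ) α₁ • z₁ - (starRingEnd ℂ) α₂ • z₂‖
      ≤ ‖α₁‖ * ‖z₁ - z₂‖ + ‖α₁ - α₂‖ * ‖z₂‖ := by
        simpa only [← map_sub, RCLike.norm_conj] using
          norm_smul_sub_smul_le ((starRingEnd ℂ) α₁) ((starRingEnd ℂ) α₂) z₁ z₂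
    _ ≤ 1 * ‖z₁ - z₂‖ + 8 / 3 * ‖z₁ - z₂‖ * (5 / 4) := by
        rw [hα₁_norm]; gcongr
    _ ≤ 6 * ‖z₁ - z₂‖ := by linarith [norm_nonneg (z₁ - z₂)]
end

section
/- Let A, B ∈ ℂ^{m×n}, and let A†, B† denote their Moore–Penrose pseudoinverses. Then B† − A† = −B†(B − A)A† + (B*B)†(B − A)* P_{N(A*)} + P_{N(B)}(B − A)*(A A*)†, where P_X denotes the orthogonal projection onto the subspace X, and N(A*), N(B) are the kernels of A* and B respectively. -/
open Matrix

/-- `N` satisfies the four Moore–Penrose equations for `M`. -/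
def IsMoorePenrose {k l : ℕ} (M : Matrix (Fin k) (Fin l) ℂ)
    (N : Matrix (Fin l) (Fin k) ℂ) : Prop :=
  M * N * M = M ∧ N * M * N = N ∧ (M * N)ᴴ = M * N ∧ (N * M)ᴴ = N * M

section aux

variable {k l : ℕ} {M : Matrix (Fin k) (Fin l) ℂ} {N : Matrix (Fin l) (Fin k) ℂ}

lemma mp_unique {N₂ : Matrix (Fin l) (Fin k) ℂ}
    (h1 : IsMoorePenrose M N) (h2 : IsMoorePenrose M N₂) : N = N₂ := by
  obtain ⟨a1, a2, a3, a4⟩ := h1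
  obtain ⟨b1, b2, b3, b4⟩ := h2
  have hMN : M * N = M * N₂ := by
    calc M * N = (M * N)ᴴ := a3.symm
      _ = Nᴴ * Mᴴ := by rw [conjTranspose_mul]
      _ = Nᴴ * (M * N₂ * M)ᴴ := by rw [b1]
      _ = Nᴴ * (Mᴴ * (M * N₂)) := by rw [conjTranspose_mul (M * N₂) M, b3]
      _ = (Nᴴ * Mᴴ) * (M * N₂) := by simp only [Matrix.mul_assoc]
      _ = (M * N)ᴴ * (M * N₂) := by rw [conjTranspose_mul]
      _ = ((M * N) * M) * N₂ := by rw [a3]; simp only [Matrix.mul_assoc]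
      _ = M * N₂ := by rw [a1]
  have hNM : N * M = N₂ * M := by
    calc N * M = (N * M)ᴴ := a4.symm
      _ = Mᴴ * Nᴴ := by rw [conjTranspose_mul]
      _ = (M * N₂ * M)ᴴ * Nᴴ := by rw [b1]
      _ = (M * (N₂ * M))ᴴ * Nᴴ := by rw [Matrix.mul_assoc]
      _ = ((N₂ * M) * Mᴴ) * Nᴴ := by rw [conjTranspose_mul, b4]
      _ = (N₂ * M) * (N * M)ᴴ := by rw [conjTranspose_mul]; simp only [Matrix.mul_assoc]
      _ = N₂ * ((M * N) * M) := by rw [a4]; simp only [Matrix.mul_assoc]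
      _ = N₂ * M := by rw [a1]
  calc N = N * M * N := a2.symm
    _ = N * (M * N₂) := by rw [Matrix.mul_assoc, hMN]
    _ = N₂ * M * N₂ := by rw [← Matrix.mul_assoc, hNM]
    _ = N₂ := b2

variable (h : IsMoorePenrose M N)
include h

lemma mpL1' : M * (N * M) = M := by rw [← Matrix.mul_assoc, h.1]

lemma mpL1 {p : ℕ} (X : Matrix (Fin l) (Fin p) ℂ) : M * (N * (M * X)) = M * X := by
  rw [← Matrix.mul_assoc, ← Matrix.mul_assoc, h.1]

lemma mpL2' : N * (M * N) = N := by rw [← Matrix.mul_assoc, h.2.1]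

lemma mpL2 {p : ℕ} (X : Matrix (Fin k) (Fin p) ℂ) : N * (M * (N * X)) = N * X := by
  rw [← Matrix.mul_assoc, ← Matrix.mul_assoc, h.2.1]

lemma mpL3' : Nᴴ * Mᴴ = M * N := by rw [← conjTranspose_mul, h.2.2.1]

lemma mpL3 {p : ℕ} (X : Matrix (Fin k) (Fin p) ℂ) : Nᴴ * (Mᴴ * X) = M * (N * X) := by
  rw [← Matrix.mul_assoc, mpL3' h, Matrix.mul_assoc]

lemma mpL4' : Mᴴ * Nᴴ = N * M := by rw [← conjTranspose_mul, h.2.2.2]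

lemma mpL4 {p : ℕ} (X : Matrix (Fin l) (Fin p) ℂ) : Mᴴ * (Nᴴ * X) = N * (M * X) := by
  rw [← Matrix.mul_assoc, mpL4' h, Matrix.mul_assoc]

lemma mpL5'0 : M * N * Nᴴ = Nᴴ := by
  rw [← h.2.2.1, ← conjTranspose_mul, mpL2' h]

lemma mpL5' : M * (N * Nᴴ) = Nᴴ := by rw [← Matrix.mul_assoc, mpL5'0 h]

lemma mpL5 {p : ℕ} (X : Matrix (Fin l) (Fin p) ℂ) : M * (N * (Nᴴ * X)) = Nᴴ * X := by
  rw [← Matrix.mul_assoc, ← Matrix.mul_assoc, mpL5'0 h]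

lemma mpL6'0 : N * M * Mᴴ = Mᴴ := by
  rw [← h.2.2.2, ← conjTranspose_mul, mpL1' h]

lemma mpL6' : N * (M * Mᴴ) = Mᴴ := by rw [← Matrix.mul_assoc, mpL6'0 h]

lemma mpL6 {p : ℕ} (X : Matrix (Fin k) (Fin p) ℂ) : N * (M * (Mᴴ * X)) = Mᴴ * X := by
  rw [← Matrix.mul_assoc, ← Matrix.mul_assoc, mpL6'0 h]

lemma mpL7'0 : Mᴴ * (M * N) = Mᴴ := by
  rw [← h.2.2.1, ← conjTranspose_mul, h.1]

lemma mpL7 {p : ℕ} (X : Matrix (Fin k) (Fin p) ℂ) : Mᴴ * (M * (N * X)) = Mᴴ * X := by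
  rw [← Matrix.mul_assoc, ← Matrix.mul_assoc, Matrix.mul_assoc Mᴴ M N, mpL7'0 h]

lemma mpL8'0 : Nᴴ * (N * M) = Nᴴ := by
  rw [← h.2.2.2, ← conjTranspose_mul, h.2.1]

lemma mpL8 {p : ℕ} (X : Matrix (Fin l) (Fin p) ℂ) : Nᴴ * (N * (M * X)) = Nᴴ * X := by
  rw [← Matrix.mul_assoc, ← Matrix.mul_assoc, Matrix.mul_assoc Nᴴ N M, mpL8'0 h]

end aux

/-- Wedin's decomposition of the difference of pseudoinverses:
`B† - A† = -B†(B - A)A† + (B*B)†(B - A)* P_{N(A*)} + P_{N(B)}(B - A)*(A A*)†`,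
where `P_{N(A*)} = I - A A†` and `P_{N(B)} = I - B† B`. -/
theorem stmt18 {m n : ℕ} (A B : Matrix (Fin m) (Fin n) ℂ)
    (Ad Bd : Matrix (Fin n) (Fin m) ℂ)
    (C : Matrix (Fin n) (Fin n) ℂ) (D : Matrix (Fin m) (Fin m) ℂ)
    (hA : IsMoorePenrose A Ad) (hB : IsMoorePenrose B Bd)
    (hC : IsMoorePenrose (Bᴴ * B) C) (hD : IsMoorePenrose (A * Aᴴ) D) :
    Bd - Ad = -(Bd * (B - A) * Ad) + C * (B - A)ᴴ * (1 - A * Ad) +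
      (1 - Bd * B) * (B - A)ᴴ * D := by
  have hCB : IsMoorePenrose (Bᴴ * B) (Bd * Bdᴴ) := by
    refine ⟨?_, ?_, ?_, ?_⟩ <;>
      simp only [conjTranspose_mul, conjTranspose_conjTranspose, Matrix.mul_assoc,
        mpL1 hB, mpL1' hB, mpL2 hB, mpL2' hB, mpL3 hB, mpL3' hB, mpL4 hB, mpL4' hB,
        mpL5 hB, mpL5' hB, mpL6 hB, mpL6' hB, mpL7 hB, mpL7'0 hB, mpL8 hB, mpL8'0 hB]
  have hDA : IsMoorePenrose (A * Aᴴ) (Adᴴ * Ad) := by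
    refine ⟨?_, ?_, ?_, ?_⟩ <;>
      simp only [conjTranspose_mul, conjTranspose_conjTranspose, Matrix.mul_assoc,
        mpL1 hA, mpL1' hA, mpL2 hA, mpL2' hA, mpL3 hA, mpL3' hA, mpL4 hA, mpL4' hA,
        mpL5 hA, mpL5' hA, mpL6 hA, mpL6' hA, mpL7 hA, mpL7'0 hA, mpL8 hA, mpL8'0 hA]
  rw [mp_unique hC hCB, mp_unique hD hDA]
  simp only [conjTranspose_sub, Matrix.sub_mul, Matrix.mul_sub, Matrix.mul_one,
    Matrix.one_mul, Matrix.mul_assoc,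
    mpL1 hB, mpL1' hB, mpL2 hB, mpL2' hB, mpL3 hB, mpL3' hB, mpL4 hB, mpL4' hB,
    mpL5 hB, mpL5' hB, mpL6 hB, mpL6' hB, mpL7 hB, mpL7'0 hB, mpL8 hB, mpL8'0 hB,
    mpL1 hA, mpL1' hA, mpL2 hA, mpL2' hA, mpL3 hA, mpL3' hA, mpL4 hA, mpL4' hA,
    mpL5 hA, mpL5' hA, mpL6 hA, mpL6' hA, mpL7 hA, mpL7'0 hA, mpL8 hA, mpL8'0 hA]
  abel
end
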